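/- (Sharpness for α > 1) Let α > 1 and 0 < ã < T. The functions y(t) = E_α(t^α) and ỹ(t) = E_α((t - ã)^α) satisfy sup_{t ∈ [ã,T]} |y(t) - ỹ(t)| ≥ (T - ã)^{α-1} ã / Γ(α). -/
import Mathlib

noncomputable def mittagLeffler (α z : ℝ) : ℝ := ∑' k : ℕ, z ^ k / Real.Gamma (α * k + 1)

lemma fact_le_gamma {α : ℝ} (hα : 1 ≤ α) (k : ℕ) :
    (k.factorial : ℝ) ≤ Real.Gamma (α * k + 1) := by
  rcases Nat.eq_zero_or_pos k with hk | hk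
  · subst hk; simp [Real.Gamma_one]
  · have hk1 : (1:ℝ) ≤ k := by exact_mod_cast hk
    have h1 : ((k : ℝ) + 1) ≤ α * k + 1 := by nlinarith
    have h2 : (2 : ℝ) ≤ (k : ℝ) + 1 := by
      have : (1 : ℝ) ≤ k := Nat.one_le_cast.mpr hk
      linarith
    calc (k.factorial : ℝ) = Real.Gamma (k + 1) := (Real.Gamma_nat_eq_factorial k).symm
      _ ≤ Real.Gamma (α * k + 1) := by
        rcases eq_or_lt_of_le h1 with h | h
        · rw [h]
        · exact (Real.Gamma_strictMonoOn_Ici (by simpa using h2) (by simp; linarith) h).le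

lemma gamma_pos {α : ℝ} (hα : 1 ≤ α) (k : ℕ) : 0 < Real.Gamma (α * k + 1) := by
  apply Real.Gamma_pos_of_pos
  positivity

lemma ml_summable {α z : ℝ} (hα : 1 ≤ α) (hz : 0 ≤ z) :
    Summable (fun k : ℕ => z ^ k / Real.Gamma (α * k + 1)) := by
  refine Summable.of_nonneg_of_le (fun k => by positivity) (fun k => ?_)
    (Real.summable_pow_div_factorial z)
  have h1 := fact_le_gamma hα k
  have h2 : (0:ℝ) < k.factorial := by positivity
  rw [div_le_div_iff₀ (h2.trans_le h1) h2]
  nlinarith [pow_nonneg hz k]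

lemma ml_nonneg {α z : ℝ} (hα : 1 ≤ α) (hz : 0 ≤ z) : 0 ≤ mittagLeffler α z :=
  tsum_nonneg (fun k => by positivity)

lemma ml_mono {α z w : ℝ} (hα : 1 ≤ α) (hz : 0 ≤ z) (hw : z ≤ w) :
    mittagLeffler α z ≤ mittagLeffler α w := by
  refine Summable.tsum_le_tsum (fun k => ?_) (ml_summable hα hz) (ml_summable hα (hz.trans hw))
  have hg := gamma_pos hα k
  gcongr

theorem stmt14 (α a' T : ℝ) (hα : 1 < α) (ha' : 0 < a') (hT : a' < T) :
    sSup ((fun t => |mittagLeffler α (t ^ α) - mittagLeffler α ((t - a') ^ α)|) ''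
        Set.Icc a' T)
      ≥ (T - a') ^ (α - 1) * a' / Real.Gamma α := by
  set b := T - a' with hb
  have hb0 : 0 < b := by simp [hb]; linarith
  have hT0 : 0 < T := ha'.trans hT
  have hα1 : 1 ≤ α := hα.le
  set f := fun t => |mittagLeffler α (t ^ α) - mittagLeffler α ((t - a') ^ α)| with hf
  -- bounded above
  have hbdd : BddAbove (f '' Set.Icc a' T) := by
    refine ⟨mittagLeffler α (T ^ α), ?_⟩
    rintro x ⟨t, ht, rfl⟩
    have ht1 : 0 ≤ t := le_trans ha'.le ht.1
    have ht2 : 0 ≤ t - a' := by linarith [ht.1]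
    have h1 : mittagLeffler α (t ^ α) ≤ mittagLeffler α (T ^ α) :=
      ml_mono hα1 (Real.rpow_nonneg ht1 α) (Real.rpow_le_rpow ht1 ht.2 (by linarith))
    have h2 : mittagLeffler α ((t - a') ^ α) ≤ mittagLeffler α (T ^ α) :=
      ml_mono hα1 (Real.rpow_nonneg ht2 α) (Real.rpow_le_rpow ht2 (by linarith [ht.2]) (by linarith))
    have h3 := ml_nonneg hα1 (Real.rpow_nonneg ht1 α)
    have h4 := ml_nonneg hα1 (Real.rpow_nonneg ht2 α)
    rw [abs_sub_le_iff]; constructor <;> linarith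
  -- key estimate at t = T
  have hmem : f T ∈ f '' Set.Icc a' T := ⟨T, ⟨hT.le, le_refl T⟩, rfl⟩
  have hsup := le_csSup hbdd hmem
  refine le_trans ?_ hsup
  -- MVT
  obtain ⟨c, hc, hceq⟩ := exists_hasDerivAt_eq_slope (fun x => x ^ α)
    (fun x => α * x ^ (α - 1)) (by linarith : b < T)
    (fun x hx => (Real.continuousAt_rpow_const x α (Or.inr (by linarith))).continuousWithinAt)
    (fun x hx => Real.hasDerivAt_rpow_const (Or.inl (hb0.trans hx.1).ne'))
  have hTb : T - b = a' := by simp [hb]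
  rw [hTb] at hceq
  have hc1 : b ≤ c := hc.1.le
  have hmvt : α * b ^ (α - 1) * a' ≤ T ^ α - b ^ α := by
    have h5 : b ^ (α - 1) ≤ c ^ (α - 1) :=
      Real.rpow_le_rpow hb0.le hc1 (by linarith)
    have := hceq
    have h6 : α * c ^ (α - 1) * a' = T ^ α - b ^ α := by
      field_simp at this ⊢; linarith [this]
    rw [← h6]
    gcongr
  -- term bound
  have hsum1 := ml_summable (z := T ^ α) hα1 (Real.rpow_nonneg hT0.le α)
  have hsum2 := ml_summable (z := b ^ α) hα1 (Real.rpow_nonneg hb0.le α)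
  have hdiff : mittagLeffler α (T ^ α) - mittagLeffler α (b ^ α)
      = ∑' k : ℕ, ((T ^ α) ^ k / Real.Gamma (α * k + 1) - (b ^ α) ^ k / Real.Gamma (α * k + 1)) :=
    (Summable.tsum_sub hsum1 hsum2).symm
  have hterm : T ^ α / Real.Gamma (α * 1 + 1) - b ^ α / Real.Gamma (α * 1 + 1)
      ≤ mittagLeffler α (T ^ α) - mittagLeffler α (b ^ α) := by
    rw [hdiff]
    have key := Summable.le_tsum (f := fun k : ℕ => ((T ^ α) ^ k / Real.Gamma (α * k + 1) - (b ^ α) ^ k / Real.Gamma (α * k + 1))) (hsum1.sub hsum2) 1 (fun j _ => ?_)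
    · simp only [pow_one, Nat.cast_one, mul_one] at key
      rw [mul_one]
      exact key
    · simp only [sub_nonneg]
      have hg := gamma_pos (α := α) hα1 j
      have hbT : b ^ α ≤ T ^ α := Real.rpow_le_rpow hb0.le (by linarith) (by linarith)
      have hbn : 0 ≤ b ^ α := Real.rpow_nonneg hb0.le α
      gcongr
  have hgα : 0 < Real.Gamma α := Real.Gamma_pos_of_pos (by linarith)
  have hgα1 : Real.Gamma (α * 1 + 1) = α * Real.Gamma α := by
    rw [mul_one, Real.Gamma_add_one (by linarith)]
  have hfT : f T = mittagLeffler α (T ^ α) - mittagLeffler α ((T - a') ^ α) := by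
    rw [hf]
    simp only
    rw [abs_of_nonneg]
    have := ml_mono hα1 (Real.rpow_nonneg hb0.le α)
      (Real.rpow_le_rpow hb0.le (by linarith) (by linarith) : b ^ α ≤ T ^ α)
    simp [hb] at this ⊢
    linarith
  rw [hfT]
  have : b ^ (α - 1) * a' / Real.Gamma α ≤ (T ^ α - b ^ α) / Real.Gamma (α * 1 + 1) := by
    rw [hgα1, div_le_div_iff₀ hgα (by positivity)]
    have hb1 : 0 ≤ b ^ (α - 1) := Real.rpow_nonneg hb0.le _
    nlinarith [hmvt]
  calc b ^ (α - 1) * a' / Real.Gamma α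
      ≤ (T ^ α - b ^ α) / Real.Gamma (α * 1 + 1) := this
    _ = T ^ α / Real.Gamma (α * 1 + 1) - b ^ α / Real.Gamma (α * 1 + 1) := by
        rw [sub_div]
    _ ≤ mittagLeffler α (T ^ α) - mittagLeffler α (b ^ α) := hterm
    _ = mittagLeffler α (T ^ α) - mittagLeffler α ((T - a') ^ α) := by rw [hb]
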